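/- If P*P satisfies a WPI with β, i.e. ‖f‖²_Π ≤ s·ℰ_Π(P*P, f) + β(s)·‖f‖²_osc for all s > 0 and f ∈ L²₀(Π), then P_X*P_X satisfies a WPI with the same β: ‖g‖²_{Π_X} ≤ s·ℰ_{Π_X}(P_X*P_X, g) + β(s)·‖g‖²_osc for all s > 0 and g ∈ L²₀(Π_X). -/

import Mathlib

/-!
Lift `g ∈ L²₀(Π_X)` to `f = g ∘ Prod.fst ∈ L²₀(Π)`. The lift preserves the norm, the mean and
the oscillation, and the Gibbs operator commutes with it: `P f = (P_X g) ∘ Prod.fst`. Indeed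
`P f (x, y)` only evaluates `f` at fresh draws `(x', y')` with `y' ~ Π_{Y|X}(·|x)` and
`x' ~ Π_{X|Y}(·|y')`, and the two disintegrations of `Π` show that these draws almost surely
avoid the `Π`-null set where `f ≠ g ∘ Prod.fst`. As `ℰ(T*T, f) = ‖f‖² - ‖T f‖²`, the Dirichlet
forms of `P*P` at `f` and of `P_X*P_X` at `g` coincide, and the WPI for `P*P` at `f` is the WPI
for `P_X*P_X` at `g`.
-/

open MeasureTheory ENNReal

noncomputable section

/-- Oscillation seminorm, valued in `[0,∞]`. -/
def oscNorm {α : Type*} [MeasurableSpace α] (μ : Measure α) (f : α → ℝ) : ℝ≥0∞ :=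
  essSup (fun p : α × α => ENNReal.ofReal |f p.1 - f p.2|) (μ.prod μ)

/-- The Dirichlet form `ℰ_μ(T, f) = ⟨(I − T)f, f⟩_μ`. -/
def dirichletForm {α : Type*} [MeasurableSpace α]
    (μ : Measure α) (T : Lp ℝ 2 μ →L[ℝ] Lp ℝ 2 μ) (f : Lp ℝ 2 μ) : ℝ :=
  @inner ℝ _ _ (f - T f) f

open ProbabilityTheory

lemma dirichletForm_adjoint_comp_self {α : Type*} [MeasurableSpace α] (μ : Measure α)
    (T : Lp ℝ 2 μ →L[ℝ] Lp ℝ 2 μ) (f : Lp ℝ 2 μ) :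
    dirichletForm μ ((ContinuousLinearMap.adjoint T) ∘L T) f = ‖f‖ ^ 2 - ‖T f‖ ^ 2 := by
  simp only [dirichletForm, inner_sub_left, ContinuousLinearMap.comp_apply,
    ContinuousLinearMap.adjoint_inner_left, real_inner_self_eq_norm_sq]

section Oscillation

variable {α β : Type*} [MeasurableSpace α] [MeasurableSpace β] {μ : Measure α} {ν : Measure β}

lemma oscNorm_congr_ae {f g : α → ℝ} (h : f =ᵐ[μ] g) : oscNorm μ f = oscNorm μ g := by
  refine essSup_congr_ae ?_
  filter_upwards [Measure.quasiMeasurePreserving_fst.ae_eq_comp h,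
    Measure.quasiMeasurePreserving_snd.ae_eq_comp h] with p h₁ h₂
  simp only [Function.comp_apply] at h₁ h₂
  rw [h₁, h₂]

lemma oscNorm_comp_measurePreserving [SFinite μ] {φ : α → β} (hφ : MeasurePreserving φ μ ν)
    {g : β → ℝ} (hg : AEMeasurable g ν) : oscNorm μ (g ∘ φ) = oscNorm ν g := by
  have hφ₂ := hφ.prod hφ
  have hosc : AEMeasurable (fun q : β × β => ENNReal.ofReal |g q.1 - g q.2|) (ν.prod ν) :=
    ((hg.comp_quasiMeasurePreserving Measure.quasiMeasurePreserving_fst).sub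
      (hg.comp_quasiMeasurePreserving Measure.quasiMeasurePreserving_snd)).abs.ennreal_ofReal
  rw [oscNorm, oscNorm, ← hφ₂.map_eq,
    essSup_map_measure (hφ₂.map_eq ▸ hosc) hφ₂.measurable.aemeasurable]
  rfl

end Oscillation

lemma Lp.integral_compMeasurePreserving {α β : Type*} [MeasurableSpace α] [MeasurableSpace β]
    {μ : Measure α} {ν : Measure β} {p : ℝ≥0∞} {φ : α → β} (hφ : MeasurePreserving φ μ ν)
    (g : Lp ℝ p ν) : ∫ a, Lp.compMeasurePreserving φ hφ g a ∂μ = ∫ b, g b ∂ν := by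
  have hmap := integral_map (μ := μ) hφ.measurable.aemeasurable (f := ⇑g)
    (hφ.map_eq ▸ Lp.aestronglyMeasurable g)
  rw [hφ.map_eq] at hmap
  rw [integral_congr_ae (Lp.coeFn_compMeasurePreserving g hφ), hmap]
  rfl

lemma Measure.bind_map_eq_map_compProd {α β γ : Type*} [MeasurableSpace α] [MeasurableSpace β]
    [MeasurableSpace γ] (μ : Measure α) [SFinite μ] (κ : Kernel α β) [IsSFiniteKernel κ]
    {f : α × β → γ} (hf : Measurable f) :
    μ.bind (fun a => (κ a).map (fun b => f (a, b))) = (μ ⊗ₘ κ).map f := by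
  have hfam : (fun a => (κ a).map (fun b => f (a, b))) = ⇑((Kernel.id ×ₖ κ).map f) := by
    funext a
    rw [Kernel.map_apply _ hf, Kernel.prod_apply, Kernel.id_apply, Measure.dirac_prod,
      Measure.map_map hf measurable_prodMk_left]
    rfl
  rw [hfam, Measure.compProd_eq_comp_prod, Measure.map_comp _ _ hf]

lemma Measure.measurePreserving_fst_fst {X Y : Type*} [MeasurableSpace X] [MeasurableSpace Y]
    (π : Measure (X × Y)) : MeasurePreserving Prod.fst π π.fst :=
  ⟨measurable_fst, rfl⟩

section Gibbs

variable {X Y : Type*} [MeasurableSpace X] [MeasurableSpace Y] {π : Measure (X × Y)}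
  [SFinite π] {κ : Kernel X Y} [IsSFiniteKernel κ] {η : Kernel Y X} [IsSFiniteKernel η]

lemma ae_ae_of_ae_snd_of_eq_compProd (hκ : π = π.fst ⊗ₘ κ) {q : Y → Prop} (h : ∀ᵐ y ∂π.snd, q y) :
    ∀ᵐ x ∂π.fst, ∀ᵐ y ∂κ x, q y := by
  have hπ : ∀ᵐ z ∂π, q z.2 := ae_of_ae_map measurable_snd.aemeasurable h
  rw [hκ] at hπ
  exact Measure.ae_ae_of_ae_compProd hπ

lemma ae_ae_of_ae_of_eq_map_swap_compProd (hη : π = (π.snd ⊗ₘ η).map Prod.swap) {p : X × Y → Prop}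
    (h : ∀ᵐ z ∂π, p z) : ∀ᵐ y ∂π.snd, ∀ᵐ x ∂η y, p (x, y) := by
  rw [hη] at h
  exact Measure.ae_ae_of_ae_compProd (ae_of_ae_map measurable_swap.aemeasurable h)

lemma ae_integral_integral_eq_of_ae_eq_comp_fst (hκ : π = π.fst ⊗ₘ κ)
    (hη : π = (π.snd ⊗ₘ η).map Prod.swap) {f : X × Y → ℝ} {g : X → ℝ}
    (hfg : f =ᵐ[π] g ∘ Prod.fst) :
    ∀ᵐ x ∂π.fst, ∫ y, ∫ x', f (x', y) ∂η y ∂κ x = ∫ y, ∫ x', g x' ∂η y ∂κ x := by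
  have hinner : ∀ᵐ y ∂π.snd, ∫ x', f (x', y) ∂η y = ∫ x', g x' ∂η y :=
    (ae_ae_of_ae_of_eq_map_swap_compProd hη hfg).mono fun _ hy => integral_congr_ae hy
  filter_upwards [ae_ae_of_ae_snd_of_eq_compProd hκ hinner] with x hx
  exact integral_congr_ae hx

lemma gibbs_compMeasurePreserving_fst (hκ : π = π.fst ⊗ₘ κ)
    (hη : π = (π.snd ⊗ₘ η).map Prod.swap) (P : Lp ℝ 2 π →L[ℝ] Lp ℝ 2 π)
    (hP : ∀ f : Lp ℝ 2 π, ∀ᵐ p ∂π, P f p = ∫ y', (∫ x', f (x', y') ∂(η y')) ∂(κ p.1))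
    (PX : Lp ℝ 2 π.fst →L[ℝ] Lp ℝ 2 π.fst)
    (hPX : ∀ g : Lp ℝ 2 π.fst, ∀ᵐ x ∂π.fst, PX g x = ∫ y, (∫ x', g x' ∂(η y)) ∂(κ x))
    (g : Lp ℝ 2 π.fst) (hfst : MeasurePreserving Prod.fst π π.fst) :
    P (Lp.compMeasurePreserving Prod.fst hfst g) =
      Lp.compMeasurePreserving Prod.fst hfst (PX g) := by
  set f := Lp.compMeasurePreserving Prod.fst hfst g
  have hPXf : ∀ᵐ x ∂π.fst, PX g x = ∫ y, (∫ x', f (x', y) ∂(η y)) ∂(κ x) := by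
    filter_upwards [hPX g, ae_integral_integral_eq_of_ae_eq_comp_fst hκ hη
      (Lp.coeFn_compMeasurePreserving g hfst)] with x h₁ h₂
    rw [h₁, h₂]
  refine Lp.ext ?_
  filter_upwards [hP f, hfst.quasiMeasurePreserving.ae hPXf,
    Lp.coeFn_compMeasurePreserving (PX g) hfst] with p h₁ h₂ h₃
  rw [h₁, h₃, Function.comp_apply, h₂]

end Gibbs

variable {X Y : Type*} [MeasurableSpace X] [MeasurableSpace Y]

theorem stmt12_general
    (π : Measure (X × Y)) [IsProbabilityMeasure π]
    (κ : X → Measure Y) (hκmeas : Measurable κ) (hκprob : ∀ x, IsProbabilityMeasure (κ x))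
    (η : Y → Measure X) (hηmeas : Measurable η) (hηprob : ∀ y, IsProbabilityMeasure (η y))
    (hκdis : π = (π.fst).bind (fun x => (κ x).map (fun y => (x, y))))
    (hηdis : π = (π.snd).bind (fun y => (η y).map (fun x => (x, y))))
    -- the deterministic-scan Gibbs operator P on L²(π)
    (P : Lp ℝ 2 π →L[ℝ] Lp ℝ 2 π)
    (hP : ∀ f : Lp ℝ 2 π, ∀ᵐ p ∂π,
      P f p = ∫ y', (∫ x', f (x', y') ∂(η y')) ∂(κ p.1))
    -- the X-marginal operator P_X on L²(π_X)
    (PX : Lp ℝ 2 π.fst →L[ℝ] Lp ℝ 2 π.fst)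
    (hPX : ∀ g : Lp ℝ 2 π.fst, ∀ᵐ x ∂π.fst,
      PX g x = ∫ y, (∫ x', g x' ∂(η y)) ∂(κ x))
    -- β and the WPI for P*P
    (β : ℝ → ℝ)
    (hwpi : ∀ s : ℝ, 0 < s → ∀ f : Lp ℝ 2 π, (∫ p, f p ∂π) = 0 →
      ENNReal.ofReal (‖f‖ ^ 2) ≤
        ENNReal.ofReal (s * dirichletForm π ((ContinuousLinearMap.adjoint P) ∘L P) f) +
          ENNReal.ofReal (β s) * (oscNorm π f) ^ 2) :
    ∀ s : ℝ, 0 < s → ∀ g : Lp ℝ 2 π.fst, (∫ x, g x ∂π.fst) = 0 →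
      ENNReal.ofReal (‖g‖ ^ 2) ≤
        ENNReal.ofReal
            (s * dirichletForm π.fst ((ContinuousLinearMap.adjoint PX) ∘L PX) g) +
          ENNReal.ofReal (β s) * (oscNorm π.fst g) ^ 2 := by
  intro s hs g hg
  let κK : Kernel X Y := ⟨κ, hκmeas⟩
  let ηK : Kernel Y X := ⟨η, hηmeas⟩
  have : IsMarkovKernel κK := ⟨hκprob⟩
  have : IsMarkovKernel ηK := ⟨hηprob⟩
  have hκ : π = π.fst ⊗ₘ κK := by
    rw [← Measure.map_id (μ := π.fst ⊗ₘ κK),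
      ← Measure.bind_map_eq_map_compProd _ κK measurable_id]
    exact hκdis
  have hη : π = (π.snd ⊗ₘ ηK).map Prod.swap := by
    rw [← Measure.bind_map_eq_map_compProd _ ηK measurable_swap]
    exact hηdis
  have hfst := Measure.measurePreserving_fst_fst π
  set f := Lp.compMeasurePreserving Prod.fst hfst g
  have hosc : oscNorm π f = oscNorm π.fst g :=
    (oscNorm_congr_ae (Lp.coeFn_compMeasurePreserving g hfst)).trans
      (oscNorm_comp_measurePreserving hfst (Lp.aestronglyMeasurable g).aemeasurable)
  have hwpi_f := hwpi s hs f ((Lp.integral_compMeasurePreserving hfst g).trans hg)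
  rwa [dirichletForm_adjoint_comp_self, gibbs_compMeasurePreserving_fst hκ hη P hP PX hPX g hfst,
    Lp.norm_compMeasurePreserving, Lp.norm_compMeasurePreserving,
    ← dirichletForm_adjoint_comp_self, hosc] at hwpi_f

/-- if `P*P` satisfies a WPI with `β`, then the `X`-marginal kernel
`P_X` satisfies a WPI for `P_X*P_X` with the same `β`. -/
theorem stmt12
    (π : Measure (X × Y)) [IsProbabilityMeasure π]
    (κ : X → Measure Y) (hκmeas : Measurable κ) (hκprob : ∀ x, IsProbabilityMeasure (κ x))
    (η : Y → Measure X) (hηmeas : Measurable η) (hηprob : ∀ y, IsProbabilityMeasure (η y))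
    (hκdis : π = (π.fst).bind (fun x => (κ x).map (fun y => (x, y))))
    (hηdis : π = (π.snd).bind (fun y => (η y).map (fun x => (x, y))))
    -- the deterministic-scan Gibbs operator P on L²(π)
    (P : Lp ℝ 2 π →L[ℝ] Lp ℝ 2 π)
    (hP : ∀ f : Lp ℝ 2 π, ∀ᵐ p ∂π,
      P f p = ∫ y', (∫ x', f (x', y') ∂(η y')) ∂(κ p.1))
    -- the X-marginal operator P_X on L²(π_X)
    (PX : Lp ℝ 2 π.fst →L[ℝ] Lp ℝ 2 π.fst)
    (hPX : ∀ g : Lp ℝ 2 π.fst, ∀ᵐ x ∂π.fst,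
      PX g x = ∫ y, (∫ x', g x' ∂(η y)) ∂(κ x))
    -- β and the WPI for P*P
    (β : ℝ → ℝ) (hβnonneg : ∀ s : ℝ, 0 < s → 0 ≤ β s)
    (hβanti : AntitoneOn β (Set.Ioi (0 : ℝ)))
    (hβlim : Filter.Tendsto β Filter.atTop (nhds 0))
    (hwpi : ∀ s : ℝ, 0 < s → ∀ f : Lp ℝ 2 π, (∫ p, f p ∂π) = 0 →
      ENNReal.ofReal (‖f‖ ^ 2) ≤
        ENNReal.ofReal (s * dirichletForm π ((ContinuousLinearMap.adjoint P) ∘L P) f) +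
          ENNReal.ofReal (β s) * (oscNorm π f) ^ 2) :
    ∀ s : ℝ, 0 < s → ∀ g : Lp ℝ 2 π.fst, (∫ x, g x ∂π.fst) = 0 →
      ENNReal.ofReal (‖g‖ ^ 2) ≤
        ENNReal.ofReal
            (s * dirichletForm π.fst ((ContinuousLinearMap.adjoint PX) ∘L PX) g) +
          ENNReal.ofReal (β s) * (oscNorm π.fst g) ^ 2 :=
  stmt12_general π κ hκmeas hκprob η hηmeas hηprob hκdis hηdis P hP PX hPX β hwpi

end
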